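/- The function θ(x) = (2 ζ(x) Γ(x+1))^(1/x) is strictly log-concave on (7.1, ∞), i.e., (log θ(x))'' < 0 for all x > 7.1. -/

import Mathlib

/-!
Write `log θ(x) = G(x) / x` with `G(x) = log (2 ζ(x) Γ(x + 1))`, so that
`x³ (log θ)''(x) = 𝒟[G] x := x² G''(x) - 2x G'(x) + 2 G(x)`. The operator `𝒟` kills linear
functions, so Euler's series `log Γ(y + 1) = ∑_{c ≥ 1} (y log (1 + 1/c) - log (1 + y/c))` gives
`𝒟[log Γ(· + 1)] x = ∑_c φ(x / c)` with `φ(t) = t²/(1+t)² + 2t/(1+t) - 2 log (1 + t)`, which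
decreases from `φ(0) = 0`; hence it is at most `φ(7) + φ(7/2)`. Since `ζ ≥ 1` and `ζ' ≤ 0`,
`𝒟[log ζ] x ≤ x² ζ''(x) - 2x ζ'(x) + 2 (ζ(x) - 1) = ∑_{n ≥ 2} ψ(x log n)` with
`ψ(u) = (2 + 2u + u²) e^(-u)` decreasing, and `ψ(7 log n) ≤ 1.2 / n²`. Finally
`2 log 2 + 1.2 (π²/6 - 1) + φ(7) + φ(7/2) < 0`.
-/

noncomputable def zeta (x : ℝ) : ℝ := ∑' n : ℕ+, 1 / (n : ℝ) ^ x

noncomputable def theta (x : ℝ) : ℝ := (2 * zeta x * Real.Gamma (x + 1)) ^ (1 / x)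

open Real Filter Topology Set

lemma iteratedDeriv_two_div_self {g g' : ℝ → ℝ} {g'' x : ℝ} (hx : x ≠ 0)
    (hg : ∀ᶠ y in 𝓝 x, HasDerivAt g (g' y) y) (hg' : HasDerivAt g' g'' x) :
    iteratedDeriv 2 (fun y => g y / y) x = (x ^ 2 * g'' - 2 * x * g' x + 2 * g x) / x ^ 3 := by
  have hderiv : deriv (fun y => g y / y) =ᶠ[𝓝 x] fun y => (g' y * y - g y * 1) / y ^ 2 := by
    filter_upwards [hg, eventually_ne_nhds hx] with y hgy hy
    exact (hgy.div (hasDerivAt_id y) hy).deriv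
  have hderiv2 := ((hg'.fun_mul (hasDerivAt_id' x)).fun_sub
    (hg.self_of_nhds.fun_mul (hasDerivAt_const x 1))).fun_div
    (hasDerivAt_pow 2 x) (pow_ne_zero 2 hx)
  rw [iteratedDeriv_succ, iteratedDeriv_one, hderiv.deriv_eq, hderiv2.deriv]
  field_simp
  ring

/-- `logPowZeta k = (-1)^k ζ^(k)`. -/
noncomputable def logPowZeta (k : ℕ) (y : ℝ) : ℝ :=
  ∑' n : ℕ, log ((n : ℝ) + 1) ^ k * ((n : ℝ) + 1) ^ (-y)

lemma zeta_eq_logPowZeta_zero (y : ℝ) : zeta y = logPowZeta 0 y := by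
  rw [zeta, logPowZeta, tsum_pnat_eq_tsum_succ (f := fun n : ℕ => 1 / (n : ℝ) ^ y)]
  congr 1 with n
  push_cast
  rw [pow_zero, one_mul, rpow_neg (by positivity), one_div]

lemma log_pow_mul_rpow_neg_nonneg (k : ℕ) {a : ℝ} (ha : 1 ≤ a) (y : ℝ) :
    0 ≤ log a ^ k * a ^ (-y) :=
  mul_nonneg (pow_nonneg (log_nonneg ha) k) (rpow_nonneg (by linarith) _)

lemma log_pow_mul_rpow_neg_le (k : ℕ) {a y : ℝ} (ha : 1 ≤ a) (hy : k + 2 ≤ y) :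
    log a ^ k * a ^ (-y) ≤ 1 / a ^ 2 := by
  have ha0 : 0 < a := by linarith
  calc log a ^ k * a ^ (-y) ≤ a ^ (k : ℝ) * a ^ (-y) := by
        rw [rpow_natCast]
        gcongr
        · exact log_nonneg ha
        · exact log_le_self ha0.le
    _ = a ^ ((k : ℝ) - y) := by rw [← rpow_add ha0, sub_eq_add_neg]
    _ ≤ a ^ (-2 : ℝ) := rpow_le_rpow_of_exponent_le ha (by linarith)
    _ = 1 / a ^ 2 := by rw [rpow_neg ha0.le, one_div, rpow_two]

lemma hasDerivAt_log_pow_mul_rpow_neg (k : ℕ) {a : ℝ} (ha : 0 < a) (y : ℝ) :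
    HasDerivAt (fun y => log a ^ k * a ^ (-y)) (-(log a ^ (k + 1) * a ^ (-y))) y := by
  have := (((hasStrictDerivAt_const_rpow ha (-y)).hasDerivAt.comp y (hasDerivAt_neg y))).const_mul
    (log a ^ k)
  exact this.congr_deriv (by ring)

lemma summable_div_nat_add_one_sq (a : ℝ) : Summable fun n : ℕ => a / ((n : ℝ) + 1) ^ 2 := by
  have := (summable_nat_add_iff 1).2 (summable_one_div_nat_pow.2 one_lt_two) |>.mul_left a
  push_cast at this
  simpa only [mul_one_div] using this

lemma summable_logPowZeta (k : ℕ) {y : ℝ} (hy : k + 2 ≤ y) :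
    Summable fun n : ℕ => log ((n : ℝ) + 1) ^ k * ((n : ℝ) + 1) ^ (-y) :=
  (summable_div_nat_add_one_sq 1).of_nonneg_of_le
    (fun n => log_pow_mul_rpow_neg_nonneg k (by simp) y)
    (fun n => log_pow_mul_rpow_neg_le k (by simp) hy)

lemma hasDerivAt_logPowZeta (k : ℕ) {y : ℝ} (hy : k + 3 < y) :
    HasDerivAt (logPowZeta k) (-logPowZeta (k + 1) y) y := by
  have := hasDerivAt_tsum_of_isPreconnected (summable_div_nat_add_one_sq 1) isOpen_Ioi
    isPreconnected_Ioi (t := Ioi ((k : ℝ) + 3))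
    (g := fun (n : ℕ) y => log ((n : ℝ) + 1) ^ k * ((n : ℝ) + 1) ^ (-y))
    (fun n z _ => hasDerivAt_log_pow_mul_rpow_neg k (by positivity) z)
    (fun n z hz => by
      rw [norm_neg, norm_of_nonneg (log_pow_mul_rpow_neg_nonneg _ (by simp) z)]
      exact log_pow_mul_rpow_neg_le _ (by simp) (by push_cast; linarith [mem_Ioi.1 hz]))
    hy (summable_logPowZeta k (by linarith)) hy
  rwa [tsum_neg] at this

lemma logPowZeta_nonneg (k : ℕ) (y : ℝ) : 0 ≤ logPowZeta k y :=
  tsum_nonneg fun n => log_pow_mul_rpow_neg_nonneg k (by simp) y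

lemma one_le_logPowZeta_zero {y : ℝ} (hy : 2 ≤ y) : 1 ≤ logPowZeta 0 y := by
  rw [logPowZeta]
  simpa using (summable_logPowZeta 0 (by simpa using hy)).le_tsum 0
    fun n _ => log_pow_mul_rpow_neg_nonneg 0 (by simp) y

/-- `zetaTermDefect (x * log a) = 𝒟[a ^ (-·)] x`. -/
noncomputable def zetaTermDefect (u : ℝ) : ℝ := (2 + 2 * u + u ^ 2) * exp (-u)

lemma hasDerivAt_zetaTermDefect (u : ℝ) :
    HasDerivAt zetaTermDefect (-(u ^ 2 * exp (-u))) u := by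
  have h := (((hasDerivAt_id u).const_mul 2).const_add 2 |>.add (hasDerivAt_pow 2 u)).mul
    (hasDerivAt_neg u).exp
  exact h.congr_deriv (by simp; ring)

lemma antitone_zetaTermDefect : Antitone zetaTermDefect :=
  antitone_of_deriv_nonpos (fun u => (hasDerivAt_zetaTermDefect u).differentiableAt)
    fun u => by rw [(hasDerivAt_zetaTermDefect u).deriv]; simp only [neg_nonpos]; positivity

lemma zetaTermDefect_seven_mul_log_le (n : ℕ) :
    zetaTermDefect (7 * log ((n : ℝ) + 2)) ≤ 1.2 / ((n : ℝ) + 2) ^ 2 := by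
  set d : ℝ := (n : ℝ) + 2 with hd
  have hd2 : 2 ≤ d := by simp [hd]
  have hd0 : 0 < d := by linarith
  set L := log d
  have hL0 : 0 ≤ L := log_nonneg (by linarith)
  have hexp : exp (-(7 * L)) = 1 / d ^ 7 := by
    rw [exp_neg, show (7 : ℝ) = (7 : ℕ) by norm_num, exp_nat_mul, exp_log hd0, one_div]
  -- `log d ≤ d - 1` is too weak only at `d = 2`
  have hpoly : 2 + 14 * L + 49 * L ^ 2 ≤ 1.2 * d ^ 5 := by
    rcases n with _ | n
    · have hL : L ≤ 0.6931471808 := by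
        rw [show L = log 2 by norm_num [L, hd]]
        exact log_two_lt_d9.le
      norm_num [hd]
      nlinarith
    · have hd3 : 3 ≤ d := by simp [hd]; linarith
      have hL : L ≤ d - 1 := log_le_sub_one_of_pos hd0
      nlinarith [mul_le_mul hL hL hL0 (by linarith), pow_le_pow_left₀ (by norm_num) hd3 3]
  rw [zetaTermDefect, hexp, mul_one_div, div_le_div_iff₀ (by positivity) (by positivity)]
  calc (2 + 2 * (7 * L) + (7 * L) ^ 2) * d ^ 2 = (2 + 14 * L + 49 * L ^ 2) * d ^ 2 := by ring
    _ ≤ 1.2 * d ^ 5 * d ^ 2 := by gcongr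
    _ = 1.2 * d ^ 7 := by ring

lemma hasSum_one_div_nat_add_two_sq :
    HasSum (fun n : ℕ => 1 / ((n : ℝ) + 2) ^ 2) (π ^ 2 / 6 - 1) := by
  have := (hasSum_nat_add_iff' 2).2 hasSum_zeta_two
  simpa [Finset.sum_range_succ] using this

lemma logPowZeta_defect_le {x : ℝ} (hx : 7 ≤ x) :
    2 * logPowZeta 0 x + 2 * x * logPowZeta 1 x + x ^ 2 * logPowZeta 2 x
      ≤ 2 + 1.2 * (π ^ 2 / 6 - 1) := by
  have hsum : HasSum (fun n : ℕ => zetaTermDefect (x * log ((n : ℝ) + 1)))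
      (2 * logPowZeta 0 x + 2 * x * logPowZeta 1 x + x ^ 2 * logPowZeta 2 x) := by
    have h0 := (summable_logPowZeta 0 (y := x) (by norm_num; linarith)).hasSum.mul_left 2
    have h1 := (summable_logPowZeta 1 (y := x) (by norm_num; linarith)).hasSum.mul_left (2 * x)
    have h2 := (summable_logPowZeta 2 (y := x) (by norm_num; linarith)).hasSum.mul_left (x ^ 2)
    refine ((h0.add h1).add h2).congr_fun fun n => ?_
    rw [zetaTermDefect, rpow_def_of_pos (by positivity)]
    ring_nf
  have htail : ∀ n : ℕ,
      zetaTermDefect (x * log (((n + 1 : ℕ) : ℝ) + 1)) ≤ 1.2 / ((n : ℝ) + 2) ^ 2 := by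
    intro n
    have hL : 0 ≤ log ((n : ℝ) + 2) := log_nonneg (by linarith [n.cast_nonneg (α := ℝ)])
    calc zetaTermDefect (x * log (((n + 1 : ℕ) : ℝ) + 1))
        ≤ zetaTermDefect (7 * log ((n : ℝ) + 2)) := by
          apply antitone_zetaTermDefect
          push_cast
          rw [add_assoc, one_add_one_eq_two]
          gcongr
      _ ≤ _ := zetaTermDefect_seven_mul_log_le n
  rw [← hsum.tsum_eq, hsum.summable.tsum_eq_zero_add]
  have h0 : zetaTermDefect (x * log (((0 : ℕ) : ℝ) + 1)) = 2 := by simp [zetaTermDefect]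
  rw [h0]
  gcongr
  exact hasSum_le htail ((summable_nat_add_iff 1).2 hsum.summable).hasSum
    (hasSum_one_div_nat_add_two_sq.mul_left 1.2 |>.congr_fun fun n => (mul_one_div _ _).symm)

noncomputable def gammaTerm (c y : ℝ) : ℝ := y * log (1 + 1 / c) - log (1 + y / c)

noncomputable def logGammaSeries (y : ℝ) : ℝ := ∑' n : ℕ, gammaTerm ((n : ℝ) + 1) y

noncomputable def digammaSeries (y : ℝ) : ℝ :=
  ∑' n : ℕ, (log (1 + 1 / ((n : ℝ) + 1)) - 1 / ((n : ℝ) + 1 + y))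

noncomputable def trigammaSeries (y : ℝ) : ℝ := ∑' n : ℕ, 1 / ((n : ℝ) + 1 + y) ^ 2

lemma gammaTerm_eq {c y : ℝ} (hc : 0 < c) (hcy : 0 < c + y) :
    gammaTerm c y = y * (log (c + 1) - log c) - (log (c + y) - log c) := by
  rw [gammaTerm, ← log_div (by positivity) hc.ne', ← log_div hcy.ne' hc.ne', add_div, add_div,
    div_self hc.ne']

lemma hasDerivAt_gammaTerm {c y : ℝ} (hc : c ≠ 0) (hcy : c + y ≠ 0) :
    HasDerivAt (gammaTerm c) (log (1 + 1 / c) - 1 / (c + y)) y := by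
  have hne : 1 + y / c ≠ 0 := by rwa [one_add_div hc, div_ne_zero_iff, and_iff_left hc]
  have h := ((hasDerivAt_id y).mul_const (log (1 + 1 / c))).sub
    ((((hasDerivAt_id y).div_const c).const_add 1).log hne)
  refine h.congr_deriv ?_
  simp only [id]
  field_simp

lemma hasDerivAt_gammaTerm_deriv (c : ℝ) {y : ℝ} (hcy : c + y ≠ 0) :
    HasDerivAt (fun y => log (1 + 1 / c) - 1 / (c + y)) (1 / (c + y) ^ 2) y := by
  have h : HasDerivAt (fun z => log (1 + 1 / c) - (c + z)⁻¹) (-(-1 / (c + y) ^ 2)) y :=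
    (((hasDerivAt_id y).const_add c).inv hcy).const_sub _
  simpa only [one_div, neg_div, neg_neg] using h

lemma abs_gammaTerm_deriv_le {c y b : ℝ} (hc : 0 < c) (hy : 0 ≤ y) (hyb : y ≤ b) :
    |log (1 + 1 / c) - 1 / (c + y)| ≤ (b + 1) / c ^ 2 := by
  have hlog_le : log (1 + 1 / c) ≤ 1 / c := by
    linarith [log_le_sub_one_of_pos (by positivity : 0 < 1 + 1 / c)]
  have hlog_ge : 1 / (c + 1) ≤ log (1 + 1 / c) := by
    convert one_sub_inv_le_log_of_pos (by positivity : 0 < 1 + 1 / c) using 1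
    field_simp
    ring
  have h1 : 1 / c - 1 / (c + y) ≤ b / c ^ 2 := by
    rw [div_sub_div _ _ hc.ne' (by positivity), div_le_div_iff₀ (by positivity) (by positivity)]
    nlinarith [mul_le_mul_of_nonneg_left hyb (sq_nonneg c), mul_nonneg hy (sq_nonneg c)]
  have h2 : -(1 / c ^ 2) ≤ 1 / (c + 1) - 1 / c := by
    rw [div_sub_div _ _ (by positivity) hc.ne', neg_le, ← neg_div,
      div_le_div_iff₀ (by positivity) (by positivity)]
    nlinarith
  have h3 : 1 / (c + y) ≤ 1 / c := one_div_le_one_div_of_le hc (by linarith)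
  have h4 : 0 ≤ 1 / c ^ 2 := by positivity
  rw [abs_le, add_div]
  constructor <;> linarith

lemma gammaTerm_one (c : ℝ) : gammaTerm c 1 = 0 := by simp [gammaTerm]

lemma summable_gammaTerm {y : ℝ} (hy : 0 < y) :
    Summable fun n : ℕ => gammaTerm ((n : ℝ) + 1) y :=
  summable_of_summable_hasDerivAt_of_isPreconnected (t := Ioo 0 (y + 1)) (y₀ := 1)
    (summable_div_nat_add_one_sq (y + 1 + 1)) isOpen_Ioo isPreconnected_Ioo
    (fun n z hz => hasDerivAt_gammaTerm (by positivity) (by linarith [hz.1]))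
    (fun n z hz => abs_gammaTerm_deriv_le (by positivity) hz.1.le hz.2.le)
    ⟨one_pos, by linarith⟩ (by simp only [gammaTerm_one, summable_zero]) ⟨hy, by linarith⟩

lemma hasDerivAt_logGammaSeries {y : ℝ} (hy : 0 < y) :
    HasDerivAt logGammaSeries (digammaSeries y) y :=
  hasDerivAt_tsum_of_isPreconnected (t := Ioo 0 (y + 1)) (y₀ := 1)
    (summable_div_nat_add_one_sq (y + 1 + 1)) isOpen_Ioo isPreconnected_Ioo
    (fun n z hz => hasDerivAt_gammaTerm (by positivity) (by linarith [hz.1]))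
    (fun n z hz => abs_gammaTerm_deriv_le (by positivity) hz.1.le hz.2.le)
    ⟨one_pos, by linarith⟩ (by simp only [gammaTerm_one, summable_zero]) ⟨hy, by linarith⟩

lemma summable_digammaSeries {y : ℝ} (hy : 0 ≤ y) :
    Summable fun n : ℕ => log (1 + 1 / ((n : ℝ) + 1)) - 1 / ((n : ℝ) + 1 + y) :=
  (summable_div_nat_add_one_sq (y + 1)).of_norm_bounded fun n =>
    abs_gammaTerm_deriv_le (by positivity) hy le_rfl

lemma one_div_nat_add_one_add_sq_le (n : ℕ) {y : ℝ} (hy : 0 ≤ y) :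
    1 / ((n : ℝ) + 1 + y) ^ 2 ≤ 1 / ((n : ℝ) + 1) ^ 2 :=
  one_div_le_one_div_of_le (by positivity) (pow_le_pow_left₀ (by positivity) (by linarith) 2)

lemma summable_trigammaSeries {y : ℝ} (hy : 0 ≤ y) :
    Summable fun n : ℕ => 1 / ((n : ℝ) + 1 + y) ^ 2 :=
  (summable_div_nat_add_one_sq 1).of_nonneg_of_le (fun n => by positivity)
    fun n => one_div_nat_add_one_add_sq_le n hy

lemma hasDerivAt_digammaSeries {y : ℝ} (hy : 0 < y) :
    HasDerivAt digammaSeries (trigammaSeries y) y :=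
  hasDerivAt_tsum_of_isPreconnected (t := Ioi 0) (summable_div_nat_add_one_sq 1) isOpen_Ioi
    isPreconnected_Ioi (fun n z hz => hasDerivAt_gammaTerm_deriv _ (by linarith [mem_Ioi.1 hz]))
    (fun n z hz => by
      rw [norm_of_nonneg (by positivity)]
      exact one_div_nat_add_one_add_sq_le n (le_of_lt hz))
    hy (summable_digammaSeries hy.le) hy

lemma sum_range_gammaTerm {y : ℝ} (hy : 0 < y) (N : ℕ) :
    ∑ i ∈ Finset.range N, gammaTerm ((i : ℝ) + 1) y
      = BohrMollerup.logGammaSeq (y + 1) N + y * (log ((N : ℝ) + 1) - log N)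
        + (log (N + (y + 1)) - log N) := by
  induction N with
  | zero => simp [BohrMollerup.logGammaSeq]
  | succ N ih =>
    rw [Finset.sum_range_succ, ih, gammaTerm_eq (by positivity) (by positivity)]
    simp only [BohrMollerup.logGammaSeq, Nat.factorial_succ, Nat.cast_mul, Finset.sum_range_succ]
    rw [log_mul (by positivity) (by positivity)]
    push_cast
    ring_nf

lemma logGammaSeries_eq_log_Gamma {y : ℝ} (hy : 0 < y) :
    logGammaSeries y = log (Gamma (y + 1)) := by
  have hlim : Tendsto (fun N : ℕ => ∑ i ∈ Finset.range N, gammaTerm ((i : ℝ) + 1) y) atTop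
      (𝓝 (log (Gamma (y + 1)) + y * 0 + 0)) := by
    simp_rw [sum_range_gammaTerm hy]
    exact ((BohrMollerup.tendsto_log_gamma (by linarith)).add
      (tendsto_log_nat_add_one_sub_log.const_mul y)).add
      ((tendsto_log_comp_add_sub_log (y + 1)).comp tendsto_natCast_atTop_atTop)
  rw [mul_zero, add_zero, add_zero] at hlim
  exact tendsto_nhds_unique (summable_gammaTerm hy).hasSum.tendsto_sum_nat hlim

/-- `gammaTermDefect (x / c) = 𝒟[gammaTerm c] x`. -/
noncomputable def gammaTermDefect (t : ℝ) : ℝ :=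
  t ^ 2 / (1 + t) ^ 2 + 2 * t / (1 + t) - 2 * log (1 + t)

lemma hasDerivAt_gammaTermDefect {t : ℝ} (ht : 0 ≤ t) :
    HasDerivAt gammaTermDefect (-(2 * t ^ 2) / (1 + t) ^ 3) t := by
  have hne : 1 + t ≠ 0 := by positivity
  have h1 : HasDerivAt (fun s => 1 + s) 1 t := (hasDerivAt_id t).const_add 1
  have h := (((hasDerivAt_pow 2 t).div (h1.pow 2) (pow_ne_zero 2 hne)).add
    (((hasDerivAt_id t).const_mul 2).div h1 hne)).sub ((h1.log hne).const_mul 2)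
  refine h.congr_deriv ?_
  simp only [id, Pi.pow_apply]
  field_simp
  ring

lemma antitoneOn_gammaTermDefect : AntitoneOn gammaTermDefect (Ici 0) := by
  refine antitoneOn_of_deriv_nonpos (convex_Ici 0)
    (fun t ht => (hasDerivAt_gammaTermDefect ht).continuousAt.continuousWithinAt)
    (fun t ht => ?_) fun t ht => ?_
  all_goals rw [interior_Ici] at ht
  · exact (hasDerivAt_gammaTermDefect (le_of_lt ht)).differentiableAt.differentiableWithinAt
  · rw [(hasDerivAt_gammaTermDefect (le_of_lt ht)).deriv]
    have : 0 < 1 + t := by linarith [mem_Ioi.1 ht]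
    exact div_nonpos_of_nonpos_of_nonneg (by nlinarith) (by positivity)

lemma gammaTermDefect_nonpos {t : ℝ} (ht : 0 ≤ t) : gammaTermDefect t ≤ 0 := by
  simpa [gammaTermDefect] using antitoneOn_gammaTermDefect self_mem_Ici ht ht

lemma gammaTerm_defect_eq {c x : ℝ} (hc : 0 < c) (hx : 0 ≤ x) :
    x ^ 2 * (1 / (c + x) ^ 2) - 2 * x * (log (1 + 1 / c) - 1 / (c + x)) + 2 * gammaTerm c x
      = gammaTermDefect (x / c) := by
  have hcx : 0 < c + x := by linarith
  have h : 1 + x / c = (c + x) / c := by field_simp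
  rw [gammaTerm, gammaTermDefect, h]
  field_simp
  ring

lemma logGammaSeries_defect_le {x : ℝ} (hx : 0 < x) :
    x ^ 2 * trigammaSeries x - 2 * x * digammaSeries x + 2 * logGammaSeries x
      ≤ gammaTermDefect x + gammaTermDefect (x / 2) := by
  have hsum : HasSum (fun n : ℕ => gammaTermDefect (x / ((n : ℝ) + 1)))
      (x ^ 2 * trigammaSeries x - 2 * x * digammaSeries x + 2 * logGammaSeries x) :=
    ((((summable_trigammaSeries hx.le).hasSum.mul_left (x ^ 2)).sub
      ((summable_digammaSeries hx.le).hasSum.mul_left (2 * x))).add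
      ((summable_gammaTerm hx).hasSum.mul_left 2)).congr_fun
      fun n => (gammaTerm_defect_eq (by positivity) hx.le).symm
  have h := sum_le_hasSum {0, 1} (fun n _ => neg_nonneg.2 (gammaTermDefect_nonpos (by positivity)))
    hsum.neg
  norm_num at h
  linarith

noncomputable def logZetaGamma (y : ℝ) : ℝ := log 2 + log (logPowZeta 0 y) + logGammaSeries y

noncomputable def logZetaGammaDeriv (y : ℝ) : ℝ :=
  -(logPowZeta 1 y / logPowZeta 0 y) + digammaSeries y

noncomputable def logZetaGammaDeriv2 (y : ℝ) : ℝ :=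
  (logPowZeta 2 y * logPowZeta 0 y - logPowZeta 1 y ^ 2) / logPowZeta 0 y ^ 2 + trigammaSeries y

lemma log_theta_eq {y : ℝ} (hy : 2 ≤ y) : log (theta y) = logZetaGamma y / y := by
  have hZ : 0 < logPowZeta 0 y := one_pos.trans_le (one_le_logPowZeta_zero hy)
  have hG : 0 < Gamma (y + 1) := Gamma_pos_of_pos (by linarith)
  rw [theta, zeta_eq_logPowZeta_zero, log_rpow (by positivity), log_mul (by positivity) hG.ne',
    log_mul two_ne_zero hZ.ne', ← logGammaSeries_eq_log_Gamma (by linarith), logZetaGamma,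
    one_div_mul_eq_div]

lemma hasDerivAt_logZetaGamma {y : ℝ} (hy : 4 < y) :
    HasDerivAt logZetaGamma (logZetaGammaDeriv y) y := by
  have hZ : logPowZeta 0 y ≠ 0 := (one_pos.trans_le (one_le_logPowZeta_zero (by linarith))).ne'
  have h := (((hasDerivAt_logPowZeta 0 (by norm_num; linarith)).log hZ).const_add (log 2)).add
    (hasDerivAt_logGammaSeries (by linarith))
  exact h.congr_deriv (by rw [logZetaGammaDeriv, neg_div])

lemma hasDerivAt_logZetaGammaDeriv {y : ℝ} (hy : 4 < y) :
    HasDerivAt logZetaGammaDeriv (logZetaGammaDeriv2 y) y := by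
  have hZ : logPowZeta 0 y ≠ 0 := (one_pos.trans_le (one_le_logPowZeta_zero (by linarith))).ne'
  have h := (((hasDerivAt_logPowZeta 1 (by norm_num; linarith)).div
    (hasDerivAt_logPowZeta 0 (by norm_num; linarith)) hZ).neg).add
    (hasDerivAt_digammaSeries (by linarith))
  exact h.congr_deriv (by rw [logZetaGammaDeriv2]; ring)

lemma log_logPowZeta_defect_le {x : ℝ} (hx : 7 ≤ x) :
    x ^ 2 * ((logPowZeta 2 x * logPowZeta 0 x - logPowZeta 1 x ^ 2) / logPowZeta 0 x ^ 2)
      + 2 * x * (logPowZeta 1 x / logPowZeta 0 x) + 2 * log (logPowZeta 0 x)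
      ≤ 1.2 * (π ^ 2 / 6 - 1) := by
  set Z₀ := logPowZeta 0 x
  set Z₁ := logPowZeta 1 x
  set Z₂ := logPowZeta 2 x
  have hZ₀ : 1 ≤ Z₀ := one_le_logPowZeta_zero (by linarith)
  have hZ₁ : 0 ≤ Z₁ := logPowZeta_nonneg 1 x
  have hZ₂ : 0 ≤ Z₂ := logPowZeta_nonneg 2 x
  have h₂ : (Z₂ * Z₀ - Z₁ ^ 2) / Z₀ ^ 2 ≤ Z₂ := by
    rw [div_le_iff₀ (by positivity)]
    nlinarith [mul_le_mul_of_nonneg_left (one_le_pow₀ (n := 2) hZ₀) hZ₂,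
      mul_le_mul_of_nonneg_left hZ₀ hZ₂]
  have h₁ : Z₁ / Z₀ ≤ Z₁ := div_le_self hZ₁ hZ₀
  have h₀ : log Z₀ ≤ Z₀ - 1 := log_le_sub_one_of_pos (by linarith)
  have := logPowZeta_defect_le hx
  nlinarith [mul_le_mul_of_nonneg_left h₂ (sq_nonneg x),
    mul_le_mul_of_nonneg_left h₁ (by linarith : 0 ≤ 2 * x)]

lemma logZetaGamma_defect_neg {x : ℝ} (hx : 7 ≤ x) :
    x ^ 2 * logZetaGammaDeriv2 x - 2 * x * logZetaGammaDeriv x + 2 * logZetaGamma x < 0 := by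
  have hsplit : x ^ 2 * logZetaGammaDeriv2 x - 2 * x * logZetaGammaDeriv x + 2 * logZetaGamma x
      = (x ^ 2 * ((logPowZeta 2 x * logPowZeta 0 x - logPowZeta 1 x ^ 2) / logPowZeta 0 x ^ 2)
          + 2 * x * (logPowZeta 1 x / logPowZeta 0 x) + 2 * log (logPowZeta 0 x))
        + (x ^ 2 * trigammaSeries x - 2 * x * digammaSeries x + 2 * logGammaSeries x)
        + 2 * log 2 := by
    rw [logZetaGammaDeriv2, logZetaGammaDeriv, logZetaGamma]
    ring
  have hZeta := log_logPowZeta_defect_le hx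
  have hGamma := logGammaSeries_defect_le (by linarith : 0 < x)
  have h₁ : gammaTermDefect x ≤ gammaTermDefect 7 :=
    antitoneOn_gammaTermDefect (by norm_num) (by simp; linarith) hx
  have h₂ : gammaTermDefect (x / 2) ≤ gammaTermDefect (7 / 2) :=
    antitoneOn_gammaTermDefect (by norm_num) (by simp; linarith) (by linarith)
  have h₇ : gammaTermDefect 7 = 161 / 64 - 6 * log 2 := by
    rw [gammaTermDefect, show (1 + 7 : ℝ) = 2 ^ 3 by norm_num, log_pow]
    norm_num
    ring
  have h₇₂ : gammaTermDefect (7 / 2) ≤ 175 / 81 - 4 * log 2 := by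
    have : 2 * log 2 ≤ log (1 + 7 / 2) := by
      rw [← log_rpow two_pos]
      exact log_le_log (by positivity) (by norm_num)
    rw [gammaTermDefect]
    norm_num at this ⊢
    linarith
  have hπ : π ^ 2 < 3.15 ^ 2 := pow_lt_pow_left₀ pi_lt_d2 pi_pos.le two_ne_zero
  have hlog2 := log_two_gt_d9
  rw [hsplit]
  linarith

theorem theta_log_concave (x : ℝ) (hx : 7.1 < x) :
    iteratedDeriv 2 (fun y => Real.log (theta y)) x < 0 := by
  have hx7 : 7 < x := by linarith
  have hθ : (fun y => log (theta y)) =ᶠ[𝓝 x] fun y => logZetaGamma y / y :=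
    (eventually_gt_nhds (by linarith : 2 < x)).mono fun y hy => log_theta_eq hy.le
  rw [hθ.iteratedDeriv_eq, iteratedDeriv_two_div_self (by positivity)
    ((eventually_gt_nhds (by linarith : 4 < x)).mono fun y hy => hasDerivAt_logZetaGamma hy)
    (hasDerivAt_logZetaGammaDeriv (by linarith))]
  exact div_neg_of_neg_of_pos (logZetaGamma_defect_neg hx7.le) (by positivity)
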